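/- arXiv:math/0301376 — 2 statements merged into one kernel-verified Lean document; each statement's English description precedes it below -/
import Mathlib

section
/- Let G be a compact group, K and H closed subgroups of G such that H acts transitively on the coset space K\G (equivalently, K\G/H is a single point). Then for every irreducible unitary representation ρ of G that possesses a nonzero K-fixed vector, the multiplicity of ρ in the quasi-regular representation of G on L²(G/H) equals the dimension of the space of H-fixed vectors of ρ, and this quantity is determined solely by the K-fixed part: for two such subgroups H₁, H₂ both acting transitively on K\G, the multiplicities [L²(G/H₁) : ρ] and [L²(G/H₂) : ρ] agree for every irreducible ρ with a nonzero K-fixed vector. -/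
/-- Left translation representation on functions `G → ℂ`. -/
noncomputable def lt (G : Type*) [Group G] (g : G) : (G → ℂ) →ₗ[ℂ] (G → ℂ) where
  toFun f := fun x => f (g⁻¹ * x)
  map_add' _ _ := rfl
  map_smul' _ _ := rfl

/-- The space of right-`H`-invariant functions on `G`: the model for `L²(G/H)`,
carrying the quasi-regular representation of `G` by left translation. -/
noncomputable def quasiReg (G : Type*) [Group G] (H : Subgroup G) : Submodule ℂ (G → ℂ) where
  carrier := {f | ∀ (x : G), ∀ h ∈ H, f (x * h) = f x}
  add_mem' := by intro f g hf hg x h hh; simp [hf x h hh, hg x h hh]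
  zero_mem' := by intro x h hh; rfl
  smul_mem' := by intro c f hf x h hh; simp [hf x h hh]

/-- `G`-equivariant linear maps from a representation `(ρ, V)` into a translation
invariant subspace `W` of functions on `G`; its dimension is the multiplicity
`[W : ρ]` of the irreducible `ρ` in `W`. -/
noncomputable def equivMaps {G : Type*} [Group G] {V : Type*} [AddCommGroup V] [Module ℂ V]
    (ρ : Representation ℂ G V) (W : Submodule ℂ (G → ℂ)) :
    Submodule ℂ (V →ₗ[ℂ] (G → ℂ)) where
  carrier := {T | (∀ v, T v ∈ W) ∧ ∀ (g : G) (v : V), T (ρ g v) = lt G g (T v)}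
  add_mem' := by
    rintro T T' ⟨hT, hTe⟩ ⟨hT', hT'e⟩
    refine ⟨fun v => W.add_mem (hT v) (hT' v), fun g v => ?_⟩
    simp [hTe g v, hT'e g v]
  zero_mem' := by
    refine ⟨fun v => W.zero_mem, fun g v => ?_⟩
    simp
  smul_mem' := by
    rintro c T ⟨hT, hTe⟩
    refine ⟨fun v => W.smul_mem c (hT v), fun g v => ?_⟩
    simp [hTe g v]

/-- The `S`-fixed vectors of a representation. -/
noncomputable def fixedVecs {G : Type*} [Group G] {V : Type*} [AddCommGroup V] [Module ℂ V]
    (ρ : Representation ℂ G V) (S : Set G) : Submodule ℂ V where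
  carrier := {v | ∀ s ∈ S, ρ s v = v}
  add_mem' := by intro v w hv hw s hs; simp [hv s hs, hw s hs]
  zero_mem' := by intro s hs; simp
  smul_mem' := by intro c v hv s hs; simp [hv s hs]

open scoped InnerProductSpace in
/-- let `G` be a compact group and `K, H ≤ G` closed subgroups with
`K\G/H` a single point, i.e. `G = K·H`.  For every irreducible unitary
representation `ρ` of `G` possessing a nonzero `K`-fixed vector, the multiplicity
of `ρ` in the quasi-regular representation `L²(G/H)` equals `dim V^H`; and this is
determined by the `K`-fixed part alone: for `H₁, H₂` both with `G = K·Hᵢ`, the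
multiplicities `[L²(G/H₁) : ρ]` and `[L²(G/H₂) : ρ]` agree. -/
theorem stmt_4 {G : Type*} [Group G] [TopologicalSpace G] [IsTopologicalGroup G]
    [CompactSpace G]
    (K H₁ H₂ : Subgroup G) (hK : IsClosed (K : Set G))
    (hH₁ : IsClosed (H₁ : Set G)) (hH₂ : IsClosed (H₂ : Set G))
    (hKH₁ : ∀ g : G, ∃ k ∈ K, ∃ h ∈ H₁, g = k * h)
    (hKH₂ : ∀ g : G, ∃ k ∈ K, ∃ h ∈ H₂, g = k * h)
    {V : Type*} [NormedAddCommGroup V] [InnerProductSpace ℂ V]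
    [FiniteDimensional ℂ V]
    (ρ : Representation ℂ G V)
    (hcont : Continuous fun p : G × V => ρ p.1 p.2)
    (hunit : ∀ (g : G) (v w : V), ⟪ρ g v, ρ g w⟫_ℂ = ⟪v, w⟫_ℂ)
    (hirr : ∀ W : Submodule ℂ V, (∀ (g : G), ∀ v ∈ W, ρ g v ∈ W) → W = ⊥ ∨ W = ⊤)
    (hKfix : ∃ v : V, v ≠ 0 ∧ ∀ k ∈ K, ρ k v = v) :
    Module.finrank ℂ (equivMaps ρ (quasiReg G H₁)) =
        Module.finrank ℂ (fixedVecs ρ (H₁ : Set G)) ∧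
    Module.finrank ℂ (equivMaps ρ (quasiReg G H₂)) =
        Module.finrank ℂ (fixedVecs ρ (H₂ : Set G)) ∧
    Module.finrank ℂ (equivMaps ρ (quasiReg G H₁)) =
        Module.finrank ℂ (equivMaps ρ (quasiReg G H₂)) := by
  classical
  obtain ⟨v, hv0, hvK⟩ := hKfix
  set S : Set V := {u | ∃ g : G, u = ρ g v - v} with hSdef
  set W : Submodule ℂ V := Submodule.span ℂ S with hWdef
  have hWinv : ∀ g : G, ∀ u ∈ W, ρ g u ∈ W := by
    intro g u hu
    have hle : W.map (ρ g) ≤ W := by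
      rw [hWdef, Submodule.map_span]
      apply Submodule.span_le.mpr
      rintro _ ⟨u', ⟨g', rfl⟩, rfl⟩
      have h1 : ρ g (ρ g' v - v) = (ρ (g * g') v - v) - (ρ g v - v) := by
        rw [map_mul]
        simp only [Module.End.mul_apply, map_sub]
        abel
      rw [h1]
      exact Submodule.sub_mem _ (Submodule.subset_span ⟨g * g', rfl⟩)
        (Submodule.subset_span ⟨g, rfl⟩)
    exact hle (Submodule.mem_map_of_mem hu)
  rcases hirr W hWinv with hWbot | hWtop
  · -- W = ⊥ : ρ is trivial
    have hfixg : ∀ g : G, ρ g v = v := by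
      intro g
      have : ρ g v - v ∈ W := Submodule.subset_span ⟨g, rfl⟩
      rw [hWbot, Submodule.mem_bot] at this
      exact sub_eq_zero.mp this
    have hspan : Submodule.span ℂ ({v} : Set V) = ⊤ := by
      rcases hirr (Submodule.span ℂ {v}) (by
        intro g u hu
        rw [Submodule.mem_span_singleton] at hu ⊢
        obtain ⟨c, rfl⟩ := hu
        exact ⟨c, by rw [map_smul, hfixg]⟩) with h | h
      · exact absurd (h ▸ Submodule.mem_span_singleton_self v) (by simp [hv0])
      · exact h
    have htriv : ∀ (g : G) (u : V), ρ g u = u := by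
      intro g u
      have hu : u ∈ Submodule.span ℂ ({v} : Set V) := hspan ▸ Submodule.mem_top
      rw [Submodule.mem_span_singleton] at hu
      obtain ⟨c, rfl⟩ := hu
      rw [map_smul, hfixg]
    have hfixtop : ∀ (H : Subgroup G), fixedVecs ρ (H : Set G) = ⊤ := by
      intro H
      refine Submodule.eq_top_iff'.mpr fun u => fun s _ => htriv s u
    have hdual : ∀ (H : Subgroup G),
        Nonempty ((equivMaps ρ (quasiReg G H)) ≃ₗ[ℂ] Module.Dual ℂ V) := by
      intro H
      refine ⟨{
        toFun := fun T => (LinearMap.proj (1 : G)).comp T.1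
        map_add' := fun T T' => rfl
        map_smul' := fun c T => rfl
        invFun := fun φ => ⟨{
          toFun := fun u => fun _ => φ u
          map_add' := fun a b => by funext x; simp
          map_smul' := fun c a => by funext x; simp }, by
            refine ⟨fun u => fun x h hh => rfl, fun g u => ?_⟩
            funext x
            show φ (ρ g u) = φ u
            rw [htriv]⟩
        left_inv := fun T => by
          apply Subtype.ext
          apply LinearMap.ext; intro u
          funext x
          show T.1 u 1 = T.1 u x
          have := T.2.2 x u
          rw [htriv] at this
          have h2 : T.1 u x = T.1 u (x⁻¹ * x) := congrFun this x
          rw [inv_mul_cancel] at h2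
          exact h2.symm
        right_inv := fun φ => rfl }⟩
    obtain ⟨e₁⟩ := hdual H₁
    obtain ⟨e₂⟩ := hdual H₂
    have h₁ : Module.finrank ℂ (equivMaps ρ (quasiReg G H₁)) = Module.finrank ℂ V := by
      rw [e₁.finrank_eq, Subspace.dual_finrank_eq]
    have h₂ : Module.finrank ℂ (equivMaps ρ (quasiReg G H₂)) = Module.finrank ℂ V := by
      rw [e₂.finrank_eq, Subspace.dual_finrank_eq]
    refine ⟨?_, ?_, by rw [h₁, h₂]⟩
    · rw [h₁, hfixtop H₁, finrank_top]
    · rw [h₂, hfixtop H₂, finrank_top]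
  · -- W = ⊤ : both sides are zero
    have hdecomp : ∀ (H : Subgroup G), (∀ g : G, ∃ k ∈ K, ∃ h ∈ H, g = k * h) →
        ∀ g : G, ∃ h ∈ H, ∃ k ∈ K, g = h⁻¹ * k⁻¹ ∧ ρ g v = ρ h⁻¹ v := by
      intro H hKH g
      obtain ⟨k, hk, h, hh, hg⟩ := hKH g⁻¹
      have hgeq : g = h⁻¹ * k⁻¹ := by
        have := congrArg (·⁻¹) hg
        simpa [mul_inv_rev] using this
      refine ⟨h, hh, k, hk, hgeq, ?_⟩
      rw [hgeq, map_mul, Module.End.mul_apply, hvK k⁻¹ (K.inv_mem hk)]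
    have hfixbot : ∀ (H : Subgroup G), (∀ g : G, ∃ k ∈ K, ∃ h ∈ H, g = k * h) →
        fixedVecs ρ (H : Set G) = ⊥ := by
      intro H hKH
      rw [Submodule.eq_bot_iff]
      intro w hw
      have hker : W ≤ LinearMap.ker ((innerSL ℂ w).toLinearMap) := by
        rw [hWdef]
        apply Submodule.span_le.mpr
        rintro _ ⟨g, rfl⟩
        obtain ⟨h, hh, k, hk, hgeq, hρ⟩ := hdecomp H hKH g
        have hinner : (inner ℂ w (ρ g v) : ℂ) = inner ℂ w v := by
          rw [hρ]
          have := hunit h w (ρ h⁻¹ v)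
          rw [hw h hh] at this
          rw [← this, ← Module.End.mul_apply, ← map_mul, mul_inv_cancel, map_one,
            Module.End.one_apply]
        simp only [SetLike.mem_coe, LinearMap.mem_ker, ContinuousLinearMap.coe_coe,
          innerSL_apply_apply, inner_sub_right, hinner, sub_self]
      have hw0 : (inner ℂ w w : ℂ) = 0 := by
        have : w ∈ LinearMap.ker ((innerSL ℂ w).toLinearMap) :=
          hker (hWtop ▸ Submodule.mem_top)
        simpa using this
      exact inner_self_eq_zero.mp hw0
    have hmapbot : ∀ (H : Subgroup G), (∀ g : G, ∃ k ∈ K, ∃ h ∈ H, g = k * h) →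
        equivMaps ρ (quasiReg G H) = ⊥ := by
      intro H hKH
      rw [Submodule.eq_bot_iff]
      rintro T ⟨hTmem, hTeq⟩
      set φ : V →ₗ[ℂ] ℂ := (LinearMap.proj (1 : G)).comp T with hφdef
      have hφH : ∀ h ∈ H, ∀ u : V, φ (ρ h u) = φ u := by
        intro h hh u
        show T (ρ h u) 1 = T u 1
        rw [hTeq h u]
        show T u (h⁻¹ * 1) = T u 1
        rw [mul_one]
        have := hTmem u 1 h⁻¹ (H.inv_mem hh)
        rwa [one_mul] at this
      have hφ0 : ∀ u : V, φ u = 0 := by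
        intro u
        have hker : W ≤ LinearMap.ker φ := by
          rw [hWdef]
          apply Submodule.span_le.mpr
          rintro _ ⟨g, rfl⟩
          obtain ⟨h, hh, k, hk, hgeq, hρ⟩ := hdecomp H hKH g
          have h1 : φ (ρ g v) = φ v := by
            rw [hρ, hφH h⁻¹ (H.inv_mem hh) v]
          simp [LinearMap.mem_ker, map_sub, h1]
        have : u ∈ LinearMap.ker φ := hker (hWtop ▸ Submodule.mem_top)
        exact this
      apply LinearMap.ext; intro u
      funext x
      have h1 : T u = lt G x (T (ρ x⁻¹ u)) := by
        rw [← hTeq x (ρ x⁻¹ u), ← Module.End.mul_apply, ← map_mul, mul_inv_cancel,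
          map_one, Module.End.one_apply]
      have h2 : T u x = T (ρ x⁻¹ u) (x⁻¹ * x) := congrFun h1 x
      rw [inv_mul_cancel] at h2
      have h3 : T (ρ x⁻¹ u) 1 = 0 := hφ0 (ρ x⁻¹ u)
      show T u x = 0
      rw [h2, h3]
    refine ⟨?_, ?_, ?_⟩
    · rw [hmapbot H₁ hKH₁, hfixbot H₁ hKH₁, finrank_bot, finrank_bot]
    · rw [hmapbot H₂ hKH₂, hfixbot H₂ hKH₂, finrank_bot, finrank_bot]
    · rw [hmapbot H₁ hKH₁, hmapbot H₂ hKH₂]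
end

section
/- Let K be a compact Lie group, σ : K → GL(V_σ) a finite-dimensional irreducible unitary representation, X a compact space with a free right K-action and K-invariant measure, and let Ṽ_σ = { F ∈ L²(X, V_σ) : F(xk) = σ(k)⁻¹F(x) for all k ∈ K }, with H ≤ K a closed subgroup acting on Ṽ_σ by (k·F)(x) = F(xk). Then the space of H-fixed vectors Ṽ_σ^H is nonzero if and only if the H-fixed subspace V_σ^H equals all of V_σ (i.e., σ restricted to H is trivial). -/
/-- let `K` be a compact Lie group with a free action on a compact
space `X` (with invariant measure), `σ : K → GL(V)` a finite-dimensional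
irreducible representation, and `H ≤ K` a closed subgroup.  Sections of the
associated bundle are modelled by equivariant maps `F : X → V`
(`F (k • x) = σ k (F x)`), on which `H` acts by translation; `F` is `H`-fixed iff
`F (h • x) = F x` for `h ∈ H`.  Then there is a nonzero `H`-fixed equivariant `F`
iff the `H`-fixed subspace `V^H` is all of `V`, i.e. `σ` restricted to `H` is
trivial. -/
theorem stmt_11 {K : Type*} [Group K] [TopologicalSpace K] [IsTopologicalGroup K]
    [CompactSpace K]
    {X : Type*} [TopologicalSpace X] [CompactSpace X] [Nonempty X]
    [MulAction K X] (hact : Continuous fun p : K × X => p.1 • p.2)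
    (hfree : ∀ (k : K) (x : X), k • x = x → k = 1)
    {V : Type*} [AddCommGroup V] [Module ℂ V] [FiniteDimensional ℂ V] [Nontrivial V]
    (σ : Representation ℂ K V)
    (hirr : ∀ W : Submodule ℂ V, (∀ (k : K), ∀ v ∈ W, σ k v ∈ W) → W = ⊥ ∨ W = ⊤)
    (H : Subgroup K) (hH : IsClosed (H : Set K)) :
    (∃ F : X → V, F ≠ 0 ∧ (∀ (k : K) (x : X), F (k • x) = σ k (F x)) ∧
        (∀ h ∈ H, ∀ x : X, F (h • x) = F x)) ↔
      (∀ h ∈ H, ∀ v : V, σ h v = v) := by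
  constructor
  · rintro ⟨F, hF0, hFeq, hFH⟩ h hh v
    set W : Submodule ℂ V := Submodule.span ℂ (Set.range F) with hWdef
    have hWinv : ∀ k : K, ∀ w ∈ W, σ k w ∈ W := by
      intro k w hw
      have hmap : Submodule.map (σ k) W ≤ W := by
        rw [hWdef, Submodule.map_span, Submodule.span_le]
        rintro _ ⟨_, ⟨x, rfl⟩, rfl⟩
        exact Submodule.subset_span ⟨k • x, (hFeq k x)⟩
      exact hmap ⟨w, hw, rfl⟩
    have hWtop : W = ⊤ := by
      rcases hirr W hWinv with hbot | htop
      · exfalso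
        apply hF0
        funext x
        have : F x ∈ W := Submodule.subset_span ⟨x, rfl⟩
        rw [hbot] at this
        simpa using this
      · exact htop
    -- the fixed space of σ h contains range F, hence all of V
    have hfix : ∀ x : X, σ h (F x) = F x := by
      intro x
      rw [← hFeq h x, hFH h hh x]
    have hle : W ≤ LinearMap.ker (σ h - LinearMap.id) := by
      rw [hWdef, Submodule.span_le]
      rintro _ ⟨x, rfl⟩
      simp [LinearMap.mem_ker, LinearMap.sub_apply, hfix x]
    have hv : v ∈ LinearMap.ker (σ h - LinearMap.id) := by
      apply hle; rw [hWtop]; trivial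
    have := hv
    simpa [LinearMap.mem_ker, LinearMap.sub_apply, sub_eq_zero] using this
  · intro htriv
    obtain ⟨v₀, hv₀⟩ := exists_ne (0 : V)
    -- choose orbit representatives
    let r : X → X := fun x => (Quotient.mk (MulAction.orbitRel K X) x).out
    have hrorbit : ∀ x : X, ∃ k : K, k • r x = x := by
      intro x
      have h1 : (Quotient.mk (MulAction.orbitRel K X) x).out ∈ MulAction.orbit K x :=
        MulAction.orbitRel_apply.mp (Quotient.exact (Quotient.out_eq _))
      obtain ⟨k, hk⟩ := h1
      exact ⟨k⁻¹, by simp only [r, ← hk]; exact inv_smul_smul k x⟩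
    have hrinv : ∀ (k : K) (x : X), r (k • x) = r x := by
      intro k x
      have : Quotient.mk (MulAction.orbitRel K X) (k • x)
          = Quotient.mk (MulAction.orbitRel K X) x :=
        Quotient.sound ⟨k, rfl⟩
      simp only [r, this]
    choose g hg using hrorbit
    have hginv : ∀ (k : K) (x : X), g (k • x) = k * g x := by
      intro k x
      have h1 : g (k • x) • r x = k • x := by rw [← hrinv k x]; exact hg (k • x)
      have h2 : (k * g x) • r x = k • x := by rw [mul_smul, hg x]
      have h3 : ((k * g x)⁻¹ * g (k • x)) • r x = r x := by
        rw [mul_smul, h1, ← h2]; exact inv_smul_smul _ _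
      have := hfree _ _ h3
      rw [inv_mul_eq_one] at this
      exact this.symm
    refine ⟨fun x => σ (g x) v₀, ?_, ?_, ?_⟩
    · intro hzero
      obtain ⟨x⟩ := ‹Nonempty X›
      have : σ (g x) v₀ = 0 := congrFun hzero x
      have h0 : σ (g x)⁻¹ (σ (g x) v₀) = 0 := by rw [this]; simp
      rw [← Module.End.mul_apply, ← map_mul, inv_mul_cancel, map_one,
        Module.End.one_apply] at h0
      exact hv₀ h0
    · intro k x
      show σ (g (k • x)) v₀ = σ k (σ (g x) v₀)
      rw [hginv k x, map_mul, Module.End.mul_apply]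
    · intro h hh x
      show σ (g (h • x)) v₀ = σ (g x) v₀
      rw [hginv h x, map_mul, Module.End.mul_apply, htriv h hh]
end
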